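/- The parallel sum of two Hermitian positive semi-definite matrices is dominated by each summand in the Loewner order: if A, B are Hermitian positive semi-definite n×n complex matrices, then A : B ≤ A and A : B ≤ B, i.e., for every vector v, v^H (A:B) v ≤ v^H A v and v^H (A:B) v ≤ v^H B v. -/

import Mathlib

/-!
For positive semidefinite `A`, `B` the kernel of `S = A + B` lies in the kernels of `A` and `B`, so
any `X` with `S X S = S` satisfies `S X A = A` and `B X S = B`. Hence
`A - B X A = A X A = (X A)ᴴ S (X A)` and `B - B X A = B X B = (X B)ᴴ S (X B)`, both of which are
positive semidefinite.
-/

open Matrix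
open scoped ComplexOrder

namespace Matrix.PosSemidef

variable {𝕜 n : Type*} [RCLike 𝕜] [Fintype n] {A B : Matrix n n 𝕜}

theorem mulVec_eq_zero_of_add_mulVec_eq_zero (hA : A.PosSemidef) (hB : B.PosSemidef)
    {v : n → 𝕜} (h : (A + B) *ᵥ v = 0) : A *ᵥ v = 0 := by
  have hsum : star v ⬝ᵥ A *ᵥ v + star v ⬝ᵥ B *ᵥ v = 0 := by
    rw [← dotProduct_add, ← add_mulVec, h, dotProduct_zero]
  rw [← hA.dotProduct_mulVec_zero_iff]
  exact ((add_eq_zero_iff_of_nonneg (hA.dotProduct_mulVec_nonneg v)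
    (hB.dotProduct_mulVec_nonneg v)).mp hsum).1

theorem mul_eq_zero_of_add_mul_eq_zero {m : Type*} [Fintype m]
    (hA : A.PosSemidef) (hB : B.PosSemidef) {Q : Matrix n m 𝕜} (h : (A + B) * Q = 0) :
    A * Q = 0 := by
  classical
  refine ext_of_mulVec_single fun i ↦ ?_
  rw [← mulVec_mulVec, zero_mulVec]
  refine hA.mulVec_eq_zero_of_add_mulVec_eq_zero hB ?_
  rw [mulVec_mulVec, h, zero_mulVec]

theorem mul_eq_zero_of_mul_add_eq_zero {m : Type*} [Fintype m]
    (hA : A.PosSemidef) (hB : B.PosSemidef) {P : Matrix m n 𝕜} (h : P * (A + B) = 0) :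
    P * A = 0 := by
  have h' : (A + B) * Pᴴ = 0 := by
    rw [← (hA.add hB).1.eq, ← conjTranspose_mul, h, conjTranspose_zero]
  rw [← conjTranspose_conjTranspose (P * A), conjTranspose_mul, hA.1.eq,
    hA.mul_eq_zero_of_add_mul_eq_zero hB h', conjTranspose_zero]

variable [DecidableEq n] {X : Matrix n n 𝕜}

theorem add_mul_mul_eq_self (hA : A.PosSemidef) (hB : B.PosSemidef)
    (hX : (A + B) * X * (A + B) = A + B) : (A + B) * X * A = A := by
  have : (1 - (A + B) * X) * A = 0 :=
    hA.mul_eq_zero_of_mul_add_eq_zero hB (by rw [sub_mul, one_mul, hX, sub_self])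
  rwa [sub_mul, one_mul, sub_eq_zero, eq_comm] at this

theorem mul_mul_add_eq_self (hA : A.PosSemidef) (hB : B.PosSemidef)
    (hX : (A + B) * X * (A + B) = A + B) : A * X * (A + B) = A := by
  have : A * (X * (A + B) - 1) = 0 :=
    hA.mul_eq_zero_of_add_mul_eq_zero hB (by rw [mul_sub, mul_one, ← mul_assoc, hX, sub_self])
  rwa [mul_sub, mul_one, sub_eq_zero, ← mul_assoc] at this

end Matrix.PosSemidef

theorem Matrix.IsHermitian.posSemidef_mul_mul_of_mul_mul_eq {𝕜 n : Type*} [RCLike 𝕜]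
    [Fintype n] {A S X : Matrix n n 𝕜} (hA : A.IsHermitian) (hS : S.PosSemidef)
    (h : S * X * A = A) : (A * X * A).PosSemidef := by
  have h' : A * Xᴴ * S = A := by
    simpa only [conjTranspose_mul, hA.eq, hS.1.eq, mul_assoc] using
      congrArg Matrix.conjTranspose h
  simpa only [conjTranspose_mul, hA.eq, ← mul_assoc, h'] using
    hS.conjTranspose_mul_mul_same (X * A)

theorem parallel_sum_le_summands_general {n : ℕ} (A B X : Matrix (Fin n) (Fin n) ℂ)
    (hA : A.PosSemidef) (hB : B.PosSemidef)
    (h1 : (A + B) * X * (A + B) = A + B) :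
    (A - B * X * A).PosSemidef ∧ (B - B * X * A).PosSemidef := by
  have hS := hA.add hB
  have hSXA : (A + B) * X * A = A := hA.add_mul_mul_eq_self hB h1
  have hSXB : (A + B) * X * B = B :=
    add_comm B A ▸ hB.add_mul_mul_eq_self hA (add_comm A B ▸ h1)
  have hBXS : B * X * (A + B) = B :=
    add_comm B A ▸ hB.mul_mul_add_eq_self hA (add_comm A B ▸ h1)
  constructor
  · have hAXA : A - B * X * A = A * X * A := by
      rw [sub_eq_iff_eq_add, ← add_mul, ← add_mul, hSXA]
    exact hAXA ▸ hA.1.posSemidef_mul_mul_of_mul_mul_eq hS hSXA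
  · have hBXB : B - B * X * A = B * X * B := by
      rw [sub_eq_iff_eq_add', ← mul_add, hBXS]
    exact hBXB ▸ hB.1.posSemidef_mul_mul_of_mul_mul_eq hS hSXB

/-- The parallel sum `A : B = B (A+B)† A` of two Hermitian positive semi-definite matrices is
dominated by each summand in the Loewner order. `X` denotes the Moore–Penrose pseudoinverse of
`A + B`, characterized by the four Penrose conditions. -/
theorem parallel_sum_le_summands {n : ℕ} (A B X : Matrix (Fin n) (Fin n) ℂ)
    (hA : A.PosSemidef) (hB : B.PosSemidef)
    (h1 : (A + B) * X * (A + B) = A + B)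
    (h2 : X * (A + B) * X = X)
    (h3 : ((A + B) * X)ᴴ = (A + B) * X)
    (h4 : (X * (A + B))ᴴ = X * (A + B)) :
    (A - B * X * A).PosSemidef ∧ (B - B * X * A).PosSemidef :=
  parallel_sum_le_summands_general A B X hA hB h1
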